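/- Suppose m₀ : [0,1] → [0,∞) is nondecreasing with ∫₀¹ m₀(v) dv = 1, that γ_r ≥ γ, x_ε ≥ E(X), G(I_{0 x_ε}) ≤ 0, and that the condition K₀′(0) · ∫_{x_ε}^∞ (1 − F(x)) dx ≤ ∫₀^{x_ε} K₀(F(x)) dx holds, where K₀′(0) denotes the right derivative of K₀ at 0. Then C_CVaR(I_{ab}) ≤ γ_r for every truncated stop loss contract I_{ab} with 0 ≤ a ≤ b and CVaR(R_{I_{ab}}) > 0. -/

import Mathlib

open MeasureTheory Set Filter

noncomputable section

/-- Truncated stop loss contract `I_{ab}` with cut-off points `a ≤ b`. -/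
def Iab (a b x : ℝ) : ℝ := min (max (x - a) 0) (b - a)

/-- Admissible reinsurance function: `0 ≤ I x ≤ x` together with the
incentive compatible (slope) condition. -/
def Admissible (I : ℝ → ℝ) : Prop :=
  (∀ x, 0 ≤ x → 0 ≤ I x ∧ I x ≤ x) ∧
    ∀ x₁ x₂, 0 ≤ x₁ → x₁ ≤ x₂ → 0 ≤ I x₂ - I x₁ ∧ I x₂ - I x₁ ≤ x₂ - x₁

/-- Pricing kernel `K(u) = ∫_u^1 (m v - 1) dv`. -/
def Ker (m : ℝ → ℝ) (u : ℝ) : ℝ := ∫ v in u..1, (m v - 1)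

/-- Insurer's expected profit `G(I) = γ E(X) - ∫_0^∞ K(F x) I'(x) dx`. -/
def Profit (γ EX : ℝ) (K F I : ℝ → ℝ) : ℝ :=
  γ * EX - ∫ x in Ioi (0:ℝ), K (F x) * deriv I x

/-- Value at Risk of the retained risk `R_I(X) = X - I(X)` at level `ε`,
given the `(1-ε)`-quantile `xε`. -/
def VaRRet (I : ℝ → ℝ) (xε : ℝ) : ℝ := xε - I xε

/-- Conditional Value at Risk of the retained risk:
`E(X | X ≥ xε) - I(xε) - (1/ε) ∫_{xε}^∞ (1 - F x) I'(x) dx`, where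
`E(X | X ≥ xε) = xε + (1/ε) ∫_{xε}^∞ (1 - F x) dx`. -/
def CVaRRet (F I : ℝ → ℝ) (ε xε : ℝ) : ℝ :=
  (xε + ε⁻¹ * ∫ x in Ioi xε, (1 - F x)) - I xε
    - ε⁻¹ * ∫ x in Ioi xε, (1 - F x) * deriv I x

/-- Full pricing kernel `K(u) = (1+γr) K₀(u) + γr (1-u)` built from a
normalized kernel `K₀`. -/
def KFull (K₀ : ℝ → ℝ) (γr u : ℝ) : ℝ := (1 + γr) * K₀ u + γr * (1 - u)

end

/-!
Write `A = (a, b)`. The slope of `I_{ab}` is a.e. the indicator of `A`, so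
`G(I_{ab}) = γ E(X) - ∫_A K(F)` and
`CVaR(R_{I_{ab}}) = |(0, xε] \ A| + ε⁻¹ ∫_{(xε, ∞) \ A} (1 - F)`.
Splitting `E(X) = ∫_0^∞ (1 - F)` over `(0, xε] \ A`, `(xε, ∞) \ A` and `A`, the three pieces
are bounded pointwise by `γ (1 - F) ≤ γr`, `γ (1 - F) ≤ γr ε⁻¹ (1 - F)` and
`γ (1 - F) ≤ γr (1 - F) ≤ K(F)`; the last holds because a nondecreasing `m₀` of mean one
makes `K₀ ≥ 0`.
-/

open Topology

section TruncatedStopLoss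

variable {a b : ℝ}

lemma Iab_eq_volume_real_Ioc_inter (ha : 0 ≤ a) (hab : a ≤ b) (x : ℝ) :
    Iab a b x = volume.real (Ioc 0 x ∩ Ioo a b) := by
  rcases lt_or_ge x b with hx | hx
  · rw [Ioc_inter_Ioo_of_left_lt hx, max_eq_right ha, Real.volume_real_Ioc, Iab,
      min_eq_left (max_le (by linarith) (by linarith))]
  · rw [Ioc_inter_Ioo_of_right_le hx, max_eq_right ha, Real.volume_real_Ioo, Iab,
      max_eq_left (sub_nonneg.2 hab), max_eq_left (by linarith), min_eq_right (by linarith)]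

lemma deriv_Iab_of_ne (hab : a ≤ b) {x : ℝ} (hxa : x ≠ a) (hxb : x ≠ b) :
    deriv (Iab a b) x = (Ioo a b).indicator 1 x := by
  rcases hxa.lt_or_gt with hxa | hxa
  · have h : Iab a b =ᶠ[𝓝 x] fun _ => 0 := by
      filter_upwards [Iio_mem_nhds hxa] with y (hy : y < a)
      rw [Iab, max_eq_right (by linarith), min_eq_left (by linarith)]
    rw [h.deriv_eq, deriv_const, indicator_of_notMem fun hx => hxa.not_gt hx.1]
  rcases hxb.lt_or_gt with hxb | hxb
  · have h : Iab a b =ᶠ[𝓝 x] fun y => y - a := by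
      filter_upwards [Ioo_mem_nhds hxa hxb] with y hy
      rw [Iab, max_eq_left (by linarith [hy.1]), min_eq_left (by linarith [hy.2])]
    rw [h.deriv_eq, deriv_sub_const, deriv_id'',
      indicator_of_mem (show x ∈ Ioo a b from ⟨hxa, hxb⟩), Pi.one_apply]
  · have h : Iab a b =ᶠ[𝓝 x] fun _ => b - a := by
      filter_upwards [Ioi_mem_nhds hxb] with y (hy : b < y)
      rw [Iab, max_eq_left (by linarith), min_eq_right (by linarith)]
    rw [h.deriv_eq, deriv_const, indicator_of_notMem fun hx => hxb.not_gt hx.2]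

lemma deriv_Iab_ae_eq (hab : a ≤ b) : deriv (Iab a b) =ᵐ[volume] (Ioo a b).indicator 1 := by
  filter_upwards [compl_mem_ae_iff.2 (measure_singleton a),
    compl_mem_ae_iff.2 (measure_singleton b)] with x hxa hxb
  exact deriv_Iab_of_ne hab hxa hxb

lemma setIntegral_mul_deriv_Iab (hab : a ≤ b) (f : ℝ → ℝ) (s : Set ℝ) :
    ∫ x in s, f x * deriv (Iab a b) x = ∫ x in s ∩ Ioo a b, f x := by
  rw [← setIntegral_indicator measurableSet_Ioo]
  refine integral_congr_ae (ae_restrict_of_ae ?_)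
  filter_upwards [deriv_Iab_ae_eq hab] with x hx
  rw [hx, ← indicator_mul_right]
  simp

end TruncatedStopLoss

section Kernel

variable {m : ℝ → ℝ}

/-- Monotonicity makes the average of `m` over `[0, u]` at most `m u`, hence at most its
average over `[u, 1]`; with total mass one this says `∫₀ᵘ m ≤ u`. -/
lemma Ker_nonneg_of_monotoneOn (hint : IntervalIntegrable m volume 0 1)
    (hmono : MonotoneOn m (Icc 0 1)) (hnorm : ∫ v in (0:ℝ)..1, m v = 1) {u : ℝ}
    (hu : u ∈ Icc (0:ℝ) 1) : 0 ≤ Ker m u := by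
  obtain ⟨hu0, hu1⟩ := hu
  have hint₁ : IntervalIntegrable m volume 0 u :=
    hint.mono_set (by rw [uIcc_of_le hu0, uIcc_of_le zero_le_one]; exact Icc_subset_Icc le_rfl hu1)
  have hint₂ : IntervalIntegrable m volume u 1 :=
    hint.mono_set (by rw [uIcc_of_le hu1, uIcc_of_le zero_le_one]; exact Icc_subset_Icc hu0 le_rfl)
  have hsplit : (∫ v in (0:ℝ)..u, m v) + ∫ v in u..1, m v = 1 := by
    rw [intervalIntegral.integral_add_adjacent_intervals hint₁ hint₂, hnorm]
  have hleft : (∫ v in (0:ℝ)..u, m v) ≤ u * m u := by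
    simpa using intervalIntegral.integral_mono_on hu0 hint₁ intervalIntegrable_const
      fun v hv => hmono ⟨hv.1, hv.2.trans hu1⟩ ⟨hu0, hu1⟩ hv.2
  have hright : (1 - u) * m u ≤ ∫ v in u..1, m v := by
    simpa [mul_comm] using intervalIntegral.integral_mono_on hu1 intervalIntegrable_const hint₂
      fun v hv => hmono ⟨hu0, hu1⟩ ⟨hu0.trans hv.1, hv.2⟩ hv.1
  have hKer : Ker m u = (∫ v in u..1, m v) - (1 - u) := by
    simp [Ker, intervalIntegral.integral_sub hint₂ intervalIntegrable_const]
  nlinarith [mul_le_mul_of_nonneg_left hleft (sub_nonneg.2 hu1),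
    mul_le_mul_of_nonneg_left hright hu0]

lemma continuousOn_Ker (hint : IntervalIntegrable m volume 0 1) :
    ContinuousOn (Ker m) (Icc 0 1) := by
  have h := intervalIntegral.continuousOn_primitive_interval_left
    ((intervalIntegrable_iff' (μ := volume)).1 (hint.sub (intervalIntegrable_const (c := 1))))
  rwa [uIcc_of_le zero_le_one] at h

lemma continuousOn_KFull_Ker (hint : IntervalIntegrable m volume 0 1) (γr : ℝ) :
    ContinuousOn (KFull (Ker m) γr) (Icc 0 1) :=
  (continuousOn_const.mul (continuousOn_Ker hint)).add
    (continuousOn_const.mul (continuousOn_const.sub continuousOn_id))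

lemma mul_one_sub_le_KFull {K₀ : ℝ → ℝ} {γr u : ℝ} (hγr : 0 ≤ γr) (hK₀ : 0 ≤ K₀ u) :
    γr * (1 - u) ≤ KFull K₀ γr u :=
  le_add_of_nonneg_left (mul_nonneg (by linarith) hK₀)

end Kernel

lemma mem_Icc_of_monotoneOn_Ici {F : ℝ → ℝ} (hF0 : F 0 = 0) (hFm : MonotoneOn F (Ici 0))
    (hF : Tendsto F atTop (𝓝 1)) {x : ℝ} (hx : 0 ≤ x) : F x ∈ Icc 0 1 :=
  ⟨hF0 ▸ hFm (mem_Ici.2 le_rfl) hx hx,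
    ge_of_tendsto hF (by
      filter_upwards [eventually_ge_atTop x] with y hy using hFm hx (hx.trans hy) hy)⟩

lemma setIntegral_Ioi_eq_add_add {f : ℝ → ℝ} {A : Set ℝ} {c d : ℝ} (hA : MeasurableSet A)
    (hAc : A ⊆ Ioi c) (hcd : c ≤ d) (hf : IntegrableOn f (Ioi c)) :
    ∫ x in Ioi c, f x = (∫ x in Ioc c d \ A, f x) + (∫ x in Ioi d \ A, f x) + ∫ x in A, f x := by
  rw [← integral_inter_add_sdiff hA hf, inter_eq_right.2 hAc, ← Ioc_union_Ioi_eq_Ioi hcd,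
    union_sdiff_distrib, setIntegral_union ((Ioc_disjoint_Ioi_same).mono sdiff_subset sdiff_subset)
      (measurableSet_Ioi.diff hA) (hf.mono_set (sdiff_subset.trans Ioc_subset_Ioi_self))
      (hf.mono_set (sdiff_subset.trans (Ioi_subset_Ioi hcd)))]
  ring

lemma Profit_Iab {γ EX : ℝ} {K F : ℝ → ℝ} {a b : ℝ} (ha : 0 ≤ a) (hab : a ≤ b) :
    Profit γ EX K F (Iab a b) = γ * EX - ∫ x in Ioo a b, K (F x) := by
  have hA : Ioo a b ⊆ Ioi 0 := fun x hx => ha.trans_lt hx.1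
  rw [Profit, setIntegral_mul_deriv_Iab hab, inter_eq_right.2 hA]

lemma CVaRRet_Iab {F : ℝ → ℝ} {a b ε xε : ℝ} (ha : 0 ≤ a) (hab : a ≤ b) (hxε : 0 ≤ xε)
    (hint : IntegrableOn (fun x => 1 - F x) (Ioi xε)) :
    CVaRRet F (Iab a b) ε xε
      = volume.real (Ioc 0 xε \ Ioo a b) + ε⁻¹ * ∫ x in Ioi xε \ Ioo a b, (1 - F x) := by
  have hvol := measureReal_inter_add_sdiff (μ := volume) (s := Ioc 0 xε)
    (measurableSet_Ioo (a := a) (b := b)) measure_Ioc_lt_top.ne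
  rw [Real.volume_real_Ioc_of_le hxε] at hvol
  rw [CVaRRet, setIntegral_mul_deriv_Iab hab, Iab_eq_volume_real_Ioc_inter ha hab,
    ← integral_inter_add_sdiff measurableSet_Ioo hint]
  linear_combination -hvol

theorem mul_integral_one_sub_le_of_le_kernel {F K : ℝ → ℝ} {A : Set ℝ} {γ γr ε xε : ℝ}
    (hγ : 0 ≤ γ) (hγr : γ ≤ γr) (hε : ε ∈ Ioc 0 1) (hxε : 0 ≤ xε)
    (hF : ∀ x, 0 < x → F x ∈ Icc 0 1) (hK : ∀ u ∈ Icc 0 1, γr * (1 - u) ≤ K u)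
    (hint : IntegrableOn (fun x => 1 - F x) (Ioi 0)) (hA : MeasurableSet A) (hA0 : A ⊆ Ioi 0)
    (hKA : IntegrableOn (fun x => K (F x)) A) :
    γ * ∫ x in Ioi 0, (1 - F x) ≤ γr * volume.real (Ioc 0 xε \ A)
      + γr * ε⁻¹ * (∫ x in Ioi xε \ A, (1 - F x)) + ∫ x in A, K (F x) := by
  have hS : ∀ x, 0 < x → 0 ≤ 1 - F x ∧ 1 - F x ≤ 1 := fun x hx =>
    ⟨sub_nonneg.2 (hF x hx).2, sub_le_self _ (hF x hx).1⟩
  rw [setIntegral_Ioi_eq_add_add hA hA0 hxε hint, mul_add, mul_add]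
  gcongr ?_ + ?_ + ?_
  · rw [← integral_const_mul, mul_comm, ← smul_eq_mul, ← setIntegral_const]
    refine setIntegral_mono_on ((hint.mono_set ?_).const_mul γ) (integrableOn_const ?_)
      (measurableSet_Ioc.diff hA) fun x hx => ?_
    · exact sdiff_subset.trans Ioc_subset_Ioi_self
    · exact (measure_mono sdiff_subset).trans_lt measure_Ioc_lt_top |>.ne
    · exact (mul_le_of_le_one_right hγ (hS x hx.1.1).2).trans hγr
  · refine mul_le_mul_of_nonneg_right ?_ (setIntegral_nonneg (measurableSet_Ioi.diff hA)
      fun x hx => (hS x (hxε.trans_lt hx.1)).1)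
    exact hγr.trans (le_mul_of_one_le_right (hγ.trans hγr) (one_le_inv_iff₀.2 hε))
  · rw [← integral_const_mul]
    refine setIntegral_mono_on ((hint.mono_set hA0).const_mul γ) hKA hA fun x hx => ?_
    calc γ * (1 - F x) ≤ γr * (1 - F x) := mul_le_mul_of_nonneg_right hγr (hS x (hA0 hx)).1
      _ ≤ K (F x) := hK _ (hF x (hA0 hx))

theorem truncated_stop_loss_ratio_le_CVaR_general
    (F m₀ : ℝ → ℝ) (γ γr ε xε : ℝ)
    (hγ : 0 < γ) (hε : ε ∈ Ioo (0:ℝ) 1)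
    (hF0 : F 0 = 0) (hFc : Continuous F) (hFm : StrictMonoOn F (Ici 0))
    (hFlim : Tendsto F atTop (nhds 1))
    (hEXint : IntegrableOn (fun x => 1 - F x) (Ioi 0))
    (hxε : 0 ≤ xε)
    (hm₀int : IntervalIntegrable m₀ volume 0 1)
    (hm₀mono : MonotoneOn m₀ (Icc 0 1))
    (hm₀norm : (∫ v in (0:ℝ)..1, m₀ v) = 1)
    (hγr : γ ≤ γr)
 :
    ∀ a b : ℝ, 0 ≤ a → a ≤ b → 0 < CVaRRet F (Iab a b) ε xε →
      Profit γ (∫ x in Ioi (0:ℝ), (1 - F x)) (KFull (Ker m₀) γr) F (Iab a b) / CVaRRet F (Iab a b) ε xε ≤ γr := by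
  intro a b ha hab hCVaR
  have hF : ∀ x, 0 ≤ x → F x ∈ Icc 0 1 := fun x hx =>
    mem_Icc_of_monotoneOn_Ici hF0 hFm.monotoneOn hFlim hx
  have hK : ∀ u ∈ Icc 0 1, γr * (1 - u) ≤ KFull (Ker m₀) γr u := fun u hu =>
    mul_one_sub_le_KFull (hγ.le.trans hγr) (Ker_nonneg_of_monotoneOn hm₀int hm₀mono hm₀norm hu)
  have hKF : IntegrableOn (fun x => KFull (Ker m₀) γr (F x)) (Ioo a b) :=
    ((continuousOn_KFull_Ker hm₀int γr).comp hFc.continuousOn fun x hx =>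
      hF x (ha.trans hx.1)).integrableOn_Icc.mono_set Ioo_subset_Icc_self
  have hbound := mul_integral_one_sub_le_of_le_kernel hγ.le hγr (Ioo_subset_Ioc_self hε) hxε
    (fun x hx => hF x hx.le) hK hEXint measurableSet_Ioo (fun x hx => ha.trans_lt hx.1) hKF
  rw [div_le_iff₀ hCVaR, Profit_Iab ha hab,
    CVaRRet_Iab ha hab hxε (hEXint.mono_set (Ioi_subset_Ioi hxε))]
  linarith

/-- Lemma 1 (CVaR): under the normalized monotone market factor model with
`γ_r ≥ γ`, `xε ≥ E(X)`, `G(I_{0 xε}) ≤ 0` and condition (e33), the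
CVaR-ratio of every truncated stop loss contract is at most `γ_r`. -/
theorem truncated_stop_loss_ratio_le_CVaR
    (F m₀ : ℝ → ℝ) (γ γr ε xε d0 : ℝ)
    (hγ : 0 < γ) (hε : ε ∈ Ioo (0:ℝ) 1)
    (hF0 : F 0 = 0) (hFc : Continuous F) (hFm : StrictMonoOn F (Ici 0))
    (hFlim : Tendsto F atTop (nhds 1))
    (hEXint : IntegrableOn (fun x => 1 - F x) (Ioi 0))
    (hxε : 0 ≤ xε) (hq : F xε = 1 - ε)
    (hm₀nn : ∀ v ∈ Icc (0:ℝ) 1, 0 ≤ m₀ v)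
    (hm₀int : IntervalIntegrable m₀ volume 0 1)
    (hm₀mono : MonotoneOn m₀ (Icc 0 1))
    (hm₀norm : (∫ v in (0:ℝ)..1, m₀ v) = 1)
    (hγr : γ ≤ γr)
    (hxεEX : (∫ x in Ioi (0:ℝ), (1 - F x)) ≤ xε)
    (hG0 : Profit γ (∫ x in Ioi (0:ℝ), (1 - F x)) (KFull (Ker m₀) γr) F (Iab 0 xε) ≤ 0)
    (hd0 : HasDerivWithinAt (Ker m₀) d0 (Ici 0) 0)
    (hcond : d0 * (∫ x in Ioi xε, (1 - F x)) ≤ ∫ x in (0:ℝ)..xε, Ker m₀ (F x))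
 :
    ∀ a b : ℝ, 0 ≤ a → a ≤ b → 0 < CVaRRet F (Iab a b) ε xε →
      Profit γ (∫ x in Ioi (0:ℝ), (1 - F x)) (KFull (Ker m₀) γr) F (Iab a b) / CVaRRet F (Iab a b) ε xε ≤ γr :=
  truncated_stop_loss_ratio_le_CVaR_general F m₀ γ γr ε xε hγ hε hF0 hFc hFm hFlim hEXint hxε hm₀int
    hm₀mono hm₀norm hγr
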